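/- Let ρ = |0⟩⟨0|_A ⊗ (1/2^b) I_B on a+b qubits with partition into C and D where |D| = d > a, and let H_D be a γ-gapped Hamiltonian on D. If β > (d ln 2 + ln 3)/γ, then there is no unitary U such that tr_C(U ρ U†) equals the Gibbs state G_β(H_D). -/

import Mathlib

open Matrix BigOperators Kronecker
open scoped Classical ComplexOrder

noncomputable section

def ptraceFst {C D : Type*} [Fintype C] (σ : Matrix (C × D) (C × D) ℂ) :
    Matrix D D ℂ := Matrix.of fun y y' => ∑ j : C, σ (j, y) (j, y')

def ptraceSnd {C D : Type*} [Fintype D] (σ : Matrix (C × D) (C × D) ℂ) :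
    Matrix C C ℂ := Matrix.of fun x x' => ∑ j : D, σ (x, j) (x', j)

def traceNorm {n : Type*} [Fintype n] [DecidableEq n] (M : Matrix n n ℂ) : ℝ :=
  ((Matrix.isHermitian_conjTranspose_mul_self M).eigenvectorUnitary.1 *
    diagonal (((↑) : ℝ → ℂ) ∘ (√·) ∘ (Matrix.isHermitian_conjTranspose_mul_self M).eigenvalues) *
    (star (Matrix.isHermitian_conjTranspose_mul_self M).eigenvectorUnitary : Matrix n n ℂ)).trace.re

def traceDist {n : Type*} [Fintype n] [DecidableEq n] (σ σ' : Matrix n n ℂ) : ℝ :=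
  traceNorm (σ - σ') / 2

def IsDensity {n : Type*} [Fintype n] (M : Matrix n n ℂ) : Prop :=
  M.PosSemidef ∧ M.trace = 1

def IsPure {n : Type*} [Fintype n] (σ : Matrix n n ℂ) : Prop :=
  ∃ ψ : n → ℂ, (∑ i, Complex.normSq (ψ i)) = 1 ∧ σ = Matrix.vecMulVec ψ (star ψ)

def inputState (a b : ℕ) :
    Matrix (Fin (2^a) × Fin (2^b)) (Fin (2^a) × Fin (2^b)) ℂ :=
  (Matrix.single 0 0 1) ⊗ₖ (((2:ℂ)^b)⁻¹ • (1 : Matrix (Fin (2^b)) (Fin (2^b)) ℂ))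

def measSub {C D : Type*} [Fintype C] [Fintype D] (σ : Matrix (C × D) (C × D) ℂ) (j : C) :
    Matrix D D ℂ := Matrix.of fun y y' => σ (j, y) (j, y')

def measProb {C D : Type*} [Fintype C] [Fintype D] (σ : Matrix (C × D) (C × D) ℂ) (j : C) : ℝ :=
  ((measSub σ j).trace).re

def gibbs {n : Type*} [Fintype n] [DecidableEq n] (β : ℝ) {H : Matrix n n ℂ}
    (hH : H.IsHermitian) : Matrix n n ℂ :=
  ((hH.cfc (fun x => Real.exp (-β * x))).trace)⁻¹ • hH.cfc (fun x => Real.exp (-β * x))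

def vNEntropy {n : Type*} [Fintype n] [DecidableEq n] (M : Matrix n n ℂ) : ℝ :=
  if h : M.IsHermitian then -∑ i, (h.eigenvalues i) * Real.logb 2 (h.eigenvalues i) else 0

def iterState (n : ℕ) (U : ℕ → Matrix (Fin 2 × Fin (2^n)) (Fin 2 × Fin (2^n)) ℂ) :
    ℕ → Matrix (Fin (2^n)) (Fin (2^n)) ℂ
  | 0 => ((2:ℂ)^n)⁻¹ • 1
  | k+1 => ptraceFst (U k * ((Matrix.single 0 0 1) ⊗ₖ iterState n U k) * (U k)ᴴ)

/-!
In the Loewner order `inputState a b ≤ 2⁻ᵇ • 1`; this bound survives unitary conjugation and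
relabelling, and tracing out the `2^c`-dimensional factor multiplies it by `2^c`. Hence every
reduced state reachable from the input is `≤ 2^(c-b) • 1 ≤ ½ • 1`, since `a < d` forces `c < b`.
A Gibbs state of a `γ`-gapped Hamiltonian on `2^d` levels, on the other hand, gives its ground
state weight at least `(1 + 2^d e^(-βγ))⁻¹`, which exceeds `3/4` once `βγ > d ln 2 + ln 3`.
-/

open scoped MatrixOrder

section PartialTrace

variable {C D : Type*} [Fintype C]

lemma ptraceFst_sub (σ τ : Matrix (C × D) (C × D) ℂ) :
    ptraceFst (σ - τ) = ptraceFst σ - ptraceFst τ := by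
  ext y y'
  simp [ptraceFst, Finset.sum_sub_distrib]

lemma ptraceFst_smul_one [DecidableEq C] [DecidableEq D] (r : ℝ) :
    ptraceFst (r • 1 : Matrix (C × D) (C × D) ℂ) = (Fintype.card C * r) • 1 := by
  ext y y'
  by_cases h : y = y' <;> simp [ptraceFst, one_apply, h, mul_comm]

lemma Matrix.PosSemidef.ptraceFst {σ : Matrix (C × D) (C × D) ℂ} (hσ : σ.PosSemidef) :
    (_root_.ptraceFst σ).PosSemidef := by
  have : _root_.ptraceFst σ = ∑ j : C, σ.submatrix (Prod.mk j) (Prod.mk j) := by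
    ext y y'
    simp [_root_.ptraceFst, Matrix.sum_apply]
  rw [this]
  exact posSemidef_sum _ fun j _ => hσ.submatrix _

lemma ptraceFst_le_smul_one [DecidableEq C] [DecidableEq D] {σ : Matrix (C × D) (C × D) ℂ}
    {r : ℝ} (h : σ ≤ r • 1) : ptraceFst σ ≤ (Fintype.card C * r) • 1 := by
  rw [le_iff, ← ptraceFst_smul_one, ← ptraceFst_sub]
  exact (le_iff.mp h).ptraceFst

end PartialTrace

section LoewnerBound

variable {n m : Type*} [DecidableEq n] [DecidableEq m]

lemma unitary_conj_le_smul_one [Fintype n] {σ U : Matrix n n ℂ} (hU : U ∈ unitaryGroup n ℂ)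
    {r : ℝ} (h : σ ≤ r • 1) : U * σ * Uᴴ ≤ r • 1 := by
  have hconj := (le_iff.mp h).mul_mul_conjTranspose_same U
  rwa [mul_sub, sub_mul, mul_smul_comm, mul_one, smul_mul_assoc,
    ← star_eq_conjTranspose, Unitary.mul_star_self_of_mem hU] at hconj

lemma reindex_le_smul_one {σ : Matrix m m ℂ} (e : m ≃ n) {r : ℝ} (h : σ ≤ r • 1) :
    reindex e e σ ≤ r • 1 := by
  have hsub : (r • 1 - reindex e e σ) = (r • 1 - σ).submatrix e.symm e.symm := by
    ext i j
    simp [one_apply]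
  rw [le_iff, hsub]
  exact (le_iff.mp h).submatrix _

lemma re_star_dotProduct_mulVec_le_of_le_smul_one [Fintype n] {M : Matrix n n ℂ} {r : ℝ}
    (h : M ≤ r • 1) {v : n → ℂ} (hv : star v ⬝ᵥ v = 1) : (star v ⬝ᵥ (M *ᵥ v)).re ≤ r := by
  have := (le_iff.mp h).dotProduct_mulVec_nonneg v
  rw [sub_mulVec, smul_mulVec, one_mulVec, dotProduct_sub, dotProduct_smul, hv,
    Complex.real_smul, mul_one] at this
  simpa using (Complex.nonneg_iff.mp this).1

end LoewnerBound

lemma inputState_le_smul_one (a b : ℕ) : inputState a b ≤ ((2 : ℝ) ^ b)⁻¹ • 1 := by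
  have hsplit :
      (((2 : ℝ) ^ b)⁻¹ • 1 : Matrix (Fin (2^a) × Fin (2^b)) _ ℂ) - inputState a b
        = diagonal (1 - Pi.single 0 1) ⊗ₖ
            (((2:ℂ)^b)⁻¹ • (1 : Matrix (Fin (2^b)) (Fin (2^b)) ℂ)) := by
    ext ⟨i, j⟩ ⟨i', j'⟩
    rcases eq_or_ne i i' with rfl | hi
    · by_cases h0 : i = 0 <;> by_cases hj : j = j' <;>
        simp [inputState, one_apply, h0, hj, eq_comm]
    · simp [inputState, one_apply, single_apply, hi]
      rintro - rfl rfl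
      exact hi rfl
  rw [le_iff, hsplit]
  refine (PosSemidef.diagonal fun i => ?_).kronecker (PosSemidef.one.smul (by positivity))
  by_cases h0 : i = 0 <;> simp [h0]

namespace Matrix.IsHermitian

variable {n : Type*} [Fintype n] [DecidableEq n] {H : Matrix n n ℂ} (hH : H.IsHermitian)

lemma cfc_mulVec_eigenvectorBasis (f : ℝ → ℝ) (j : n) :
    hH.cfc f *ᵥ ⇑(hH.eigenvectorBasis j)
      = (f (hH.eigenvalues j) : ℂ) • ⇑(hH.eigenvectorBasis j) := by
  have hsingle (c : ℂ) : Pi.single j c = c • Pi.single j 1 := by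
    rw [← Pi.single_smul', smul_eq_mul, mul_one]
  rw [IsHermitian.cfc, Unitary.conjStarAlgAut_apply, ← mulVec_mulVec, ← mulVec_mulVec,
    star_eigenvectorUnitary_mulVec, diagonal_mulVec_single]
  simp only [Function.comp_apply, mul_one]
  rw [hsingle, mulVec_smul, eigenvectorUnitary_mulVec]
  rfl

lemma trace_cfc (f : ℝ → ℝ) : (hH.cfc f).trace = ∑ i, (f (hH.eigenvalues i) : ℂ) := by
  rw [IsHermitian.cfc, Unitary.conjStarAlgAut_apply, trace_mul_cycle, Unitary.coe_star_mul_self,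
    one_mul, trace_diagonal]
  simp

lemma star_eigenvectorBasis_dotProduct_self (j : n) :
    star ⇑(hH.eigenvectorBasis j) ⬝ᵥ ⇑(hH.eigenvectorBasis j) = 1 := by
  have h := orthonormal_iff_ite.mp hH.eigenvectorBasis.orthonormal j j
  rwa [if_pos rfl, EuclideanSpace.inner_eq_star_dotProduct, dotProduct_comm] at h

lemma star_dotProduct_gibbs_mulVec_eigenvectorBasis (β : ℝ) (j : n) :
    star ⇑(hH.eigenvectorBasis j) ⬝ᵥ (gibbs β hH *ᵥ ⇑(hH.eigenvectorBasis j))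
      = ((Real.exp (-β * hH.eigenvalues j) / ∑ i, Real.exp (-β * hH.eigenvalues i) : ℝ) :
          ℂ) := by
  rw [gibbs, smul_mulVec, dotProduct_smul, cfc_mulVec_eigenvectorBasis, dotProduct_smul,
    star_eigenvectorBasis_dotProduct_self, trace_cfc]
  push_cast
  simp [div_eq_inv_mul]

end Matrix.IsHermitian

lemma le_exp_div_sum_exp_of_gap {ι : Type*} [Fintype ι] {E : ι → ℝ} {i₀ : ι} {β γ : ℝ}
    (hβ : 0 ≤ β) (hgap : ∀ i, i ≠ i₀ → E i₀ + γ ≤ E i) :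
    (1 + Fintype.card ι * Real.exp (-(β * γ)))⁻¹
      ≤ Real.exp (-β * E i₀) / ∑ i, Real.exp (-β * E i) := by
  set w := Real.exp (-β * E i₀)
  have hterm (i : ι) :
      Real.exp (-β * E i) ≤ w * ((if i = i₀ then 1 else 0) + Real.exp (-(β * γ))) := by
    rcases eq_or_ne i i₀ with rfl | hi
    · rw [if_pos rfl]
      exact le_mul_of_one_le_right (Real.exp_pos _).le (by linarith [Real.exp_pos (-(β * γ))])
    · rw [if_neg hi, zero_add, ← Real.exp_add]
      exact Real.exp_le_exp.mpr (by nlinarith [hgap i hi])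
  have hsum :
      ∑ i, Real.exp (-β * E i) ≤ w * (1 + Fintype.card ι * Real.exp (-(β * γ))) := by
    calc ∑ i, Real.exp (-β * E i)
        ≤ ∑ i, w * ((if i = i₀ then 1 else 0) + Real.exp (-(β * γ))) :=
          Finset.sum_le_sum fun i _ => hterm i
      _ = w * (1 + Fintype.card ι * Real.exp (-(β * γ))) := by
          simp [← Finset.mul_sum, Finset.sum_add_distrib]
  have hpos : 0 < ∑ i, Real.exp (-β * E i) :=
    Finset.sum_pos (fun i _ => Real.exp_pos _) ⟨i₀, Finset.mem_univ _⟩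
  rw [le_div_iff₀ hpos, inv_mul_le_iff₀ (by positivity)]
  linarith

lemma mul_exp_neg_lt_inv_of_log_add_log_lt {N K t : ℝ} (hN : 0 < N) (hK : 0 < K)
    (ht : Real.log N + Real.log K < t) : N * Real.exp (-t) < K⁻¹ := by
  rw [← Real.log_mul hN.ne' hK.ne'] at ht
  calc N * Real.exp (-t) < N * Real.exp (-Real.log (N * K)) := by gcongr
    _ = K⁻¹ := by
      rw [Real.exp_neg, Real.exp_log (by positivity)]
      field_simp

theorem stmt13 (a b c d : ℕ) (hn : a + b = c + d) (hd : a < d) (γ β : ℝ) (hγ : 0 < γ)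
    (H : Matrix (Fin (2^d)) (Fin (2^d)) ℂ) (hH : H.IsHermitian)
    (hgapped : ∃ i₀, (∀ i, hH.eigenvalues i₀ ≤ hH.eigenvalues i) ∧
        ∀ i, i ≠ i₀ → hH.eigenvalues i₀ + γ ≤ hH.eigenvalues i)
    (hβ : β > (d * Real.log 2 + Real.log 3) / γ)
    (e : (Fin (2^a) × Fin (2^b)) ≃ (Fin (2^c) × Fin (2^d))) :
    ¬ ∃ U ∈ Matrix.unitaryGroup (Fin (2^c) × Fin (2^d)) ℂ,
        ptraceFst (U * (Matrix.reindex e e (inputState a b)) * Uᴴ) = gibbs β hH := by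
  rintro ⟨U, hU, hEq⟩
  obtain ⟨i₀, -, hgap⟩ := hgapped
  have hβγ : Real.log ((2 : ℝ) ^ d) + Real.log 3 < β * γ := by
    rw [Real.log_pow]
    exact (div_lt_iff₀ hγ).mp hβ
  have hβ0 : 0 ≤ β := le_trans (by positivity) hβ.le
  have hsmall := mul_exp_neg_lt_inv_of_log_add_log_lt (by positivity) three_pos hβγ
  have hlower := le_exp_div_sum_exp_of_gap (E := hH.eigenvalues) hβ0 hgap
  have hupper := re_star_dotProduct_mulVec_le_of_le_smul_one
    (hEq ▸ ptraceFst_le_smul_one (unitary_conj_le_smul_one hU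
      (reindex_le_smul_one e (inputState_le_smul_one a b))))
    (hH.star_eigenvectorBasis_dotProduct_self i₀)
  rw [hH.star_dotProduct_gibbs_mulVec_eigenvectorBasis, Complex.ofReal_re] at hupper
  have hcb : (2 : ℝ) ^ c * ((2 : ℝ) ^ b)⁻¹ ≤ 1 / 2 := by
    rw [← div_eq_mul_inv, div_le_iff₀ (by positivity)]
    calc (2 : ℝ) ^ c = 1 / 2 * 2 ^ (c + 1) := by ring
      _ ≤ 1 / 2 * 2 ^ b := by gcongr <;> [norm_num; omega]
  simp only [Fintype.card_fin, Nat.cast_pow, Nat.cast_ofNat] at hlower hupper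
  have h34 : 3 / 4 < (1 + (2 : ℝ) ^ d * Real.exp (-(β * γ)))⁻¹ := by
    rw [lt_inv_comm₀ (by norm_num) (by positivity)]
    linarith
  linarith

end
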